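/- arXiv:1210.4991 — 2 statements merged into one kernel-verified Lean document; each statement's English description precedes it below -/
import Mathlib

section
/- The polynomial x⁵ − 2x⁴ − 10x³ + 23x² − 6x − 4 over ℚ has invariants satisfying δ = 25Δ/A² = (5/13)², where A and Δ are the degree-4 invariant and the discriminant-invariant of the associated binary quintic. -/
/- Cayley Ω-process, transvectants, and the invariants of the binary quintic,
over a field K. Variables in `Fin 10`: 0..5 are the coefficients a₀,…,a₅;
6 = x (and x₁), 7 = y (and y₁); 8 = x₂; 9 = y₂. -/

open MvPolynomial

variable {K : Type*} [Field K]

/-- The Cayley operator Ω = ∂²/∂x₁∂y₂ − ∂²/∂x₂∂y₁. -/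
noncomputable def Omega (w : MvPolynomial (Fin 10) K) : MvPolynomial (Fin 10) K :=
  pderiv 6 (pderiv 9 w) - pderiv 8 (pderiv 7 w)

/-- Rename the variables x,y (6,7) of a form to x₂,y₂ (8,9). -/
noncomputable def toSecond (g : MvPolynomial (Fin 10) K) : MvPolynomial (Fin 10) K :=
  bind₁ (fun i => if i = 6 then X 8 else if i = 7 then X 9 else X i) g

/-- Substitute x₁ = x₂ = x, y₁ = y₂ = y at the end of the Ω-process. -/
noncomputable def collapse (w : MvPolynomial (Fin 10) K) : MvPolynomial (Fin 10) K :=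
  bind₁ (fun i => if i = 8 then X 6 else if i = 9 then X 7 else X i) w

/-- The m-th transvectant (f,g)^m via Cayley's Ω-process. -/
noncomputable def transvectant (m : ℕ) (f g : MvPolynomial (Fin 10) K) :
    MvPolynomial (Fin 10) K :=
  collapse (Omega^[m] (f * toSecond g))

/-- The generic binary quintic f = a₀x⁵ + a₁x⁴y + a₂x³y² + a₃x²y³ + a₄xy⁴ + a₅y⁵. -/
noncomputable def genQuintic : MvPolynomial (Fin 10) K :=
  X 0 * X 6 ^ 5 + X 1 * X 6 ^ 4 * X 7 + X 2 * X 6 ^ 3 * X 7 ^ 2 +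
    X 3 * X 6 ^ 2 * X 7 ^ 3 + X 4 * X 6 * X 7 ^ 4 + X 5 * X 7 ^ 5

/-- The covariant i = (f,f)⁴/288, of order 2 and degree 2. -/
noncomputable def covI : MvPolynomial (Fin 10) K :=
  C (288 : K)⁻¹ * transvectant 4 genQuintic genQuintic

/-- The covariant H = (f,f)²/16, of order 6 and degree 2. -/
noncomputable def covH : MvPolynomial (Fin 10) K :=
  C (16 : K)⁻¹ * transvectant 2 genQuintic genQuintic

/-- The covariant j = −(f,i)²/12, of order 3 and degree 3. -/
noncomputable def covJ : MvPolynomial (Fin 10) K :=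
  -(C (12 : K)⁻¹ * transvectant 2 genQuintic covI)

/-- The invariant A = (i,i)²/32, of degree 4. -/
noncomputable def invA : MvPolynomial (Fin 10) K :=
  C (32 : K)⁻¹ * transvectant 2 covI covI

/-- The covariant τ = (j,j)²/16, of order 2 and degree 6. -/
noncomputable def covTau : MvPolynomial (Fin 10) K :=
  C (16 : K)⁻¹ * transvectant 2 covJ covJ

/-- The invariant B = (τ,i)²/8, of degree 8. -/
noncomputable def invB : MvPolynomial (Fin 10) K :=
  C (8 : K)⁻¹ * transvectant 2 covTau covI

/-- The invariant Δ = (A²−4B)/125, of degree 8 (the discriminant). -/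
noncomputable def invDelta : MvPolynomial (Fin 10) K :=
  C (125 : K)⁻¹ * (invA ^ 2 - 4 * invB)

/-- The invariant C = (τ,τ)²/6, of degree 12. -/
noncomputable def invC : MvPolynomial (Fin 10) K :=
  C (6 : K)⁻¹ * transvectant 2 covTau covTau

/-- The invariant M = (−9C + 2000AΔ + 1008A³)/25, of degree 12. -/
noncomputable def invM : MvPolynomial (Fin 10) K :=
  C (25 : K)⁻¹ * (-9 * invC + 2000 * invA * invDelta + 1008 * invA ^ 3)


/-! Specializing the coefficients `a₀, …, a₅` fixes the variables `x, y, x₂, y₂`, so it commutes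
with the Ω-process: every covariant of the example quintic is a transvectant of already
specialized forms. For forms `f, g` free of `x₂, y₂`, the Cayley operator `Ω` is the difference
of the commuting operators `∂x₁∂y₂` and `∂x₂∂y₁`, and the binomial theorem gives the classical
expansion `(f,g)^m = ∑ₖ (-1)^(m-k) (m choose k) ∂ₓᵏ∂ᵧ^(m-k) f · ∂ᵧᵏ∂ₓ^(m-k) g`.
With it the covariants `i, j, τ` of the example are explicit binary forms, `A = 110578`,
`B = 795872396`, and `Δ = (A² - 4B)/125 = 8506² = (A/13)²`. -/

theorem Derivation.map_ofNat {R A M : Type*} [CommSemiring R] [CommSemiring A] [Algebra R A]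
    [AddCommMonoid M] [Module A M] [Module R M] (D : Derivation R A M) (n : ℕ) [n.AtLeastTwo] :
    D (no_index (OfNat.ofNat n : A)) = 0 :=
  D.map_natCast n

namespace MvPolynomial

variable {σ R : Type*} [CommSemiring R]

theorem pderiv_pderiv_comm (i j : σ) (p : MvPolynomial σ R) :
    pderiv i (pderiv j p) = pderiv j (pderiv i p) := by
  classical
  induction p using MvPolynomial.induction_on with
  | C a => simp
  | add p q hp hq => simp only [map_add, hp, hq]
  | mul_X p k hp =>
    simp only [Derivation.leibniz, pderiv_X, Pi.single_apply, smul_eq_mul, map_add, hp]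
    split_ifs <;> simp only [pderiv_one, map_zero, mul_zero, add_zero, mul_one] <;> ring

theorem pderiv_eq_zero_of_mem_supported {s : Set σ} {i : σ} {p : MvPolynomial σ R}
    (hp : p ∈ supported R s) (hi : i ∉ s) : pderiv i p = 0 :=
  pderiv_eq_zero_of_notMem_vars fun h => hi (mem_supported.1 hp h)

theorem pderiv_mem_supported {s : Set σ} (i : σ) {p : MvPolynomial σ R}
    (hp : p ∈ supported R s) : pderiv i p ∈ supported R s := by
  classical
  induction hp using Algebra.adjoin_induction with
  | mem x hx =>
    obtain ⟨j, -, rfl⟩ := hx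
    rw [pderiv_X, Pi.single_apply]
    split_ifs <;> simp
  | algebraMap r => simp [algebraMap_eq]
  | add p q _ _ hp hq => simpa using add_mem hp hq
  | mul p q hp' hq' hp hq =>
    rw [Derivation.leibniz, smul_eq_mul, smul_eq_mul]
    exact add_mem (mul_mem hp' hq) (mul_mem hq' hp)

theorem iterate_pderiv_mem_supported {s : Set σ} (i : σ) (n : ℕ) {p : MvPolynomial σ R}
    (hp : p ∈ supported R s) : (pderiv i)^[n] p ∈ supported R s := by
  induction n generalizing p with
  | zero => exact hp
  | succ n ih => exact ih (pderiv_mem_supported i hp)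

theorem bind₁_eqOn_supported {τ : Type*} {s : Set σ} {f g : σ → MvPolynomial τ R}
    (h : ∀ i ∈ s, f i = g i) {p : MvPolynomial σ R} (hp : p ∈ supported R s) :
    bind₁ f p = bind₁ g p := by
  rw [supported_eq_range_rename, AlgHom.mem_range] at hp
  obtain ⟨p, rfl⟩ := hp
  rw [bind₁_rename, bind₁_rename]
  exact congrArg (bind₁ · p) (_root_.funext fun i : s => h i i.2)

theorem pderiv_bind₁_comm {f : σ → MvPolynomial σ R} {j : σ}
    (hf : ∀ i, pderiv j (f i) = bind₁ f (pderiv j (X i))) (p : MvPolynomial σ R) :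
    pderiv j (bind₁ f p) = bind₁ f (pderiv j p) := by
  induction p using MvPolynomial.induction_on with
  | C a => simp
  | add p q hp hq => simp only [map_add, hp, hq]
  | mul_X p i hp =>
    simp only [map_add, map_mul, Derivation.leibniz, smul_eq_mul, bind₁_X_right, hp, hf]

theorem bind₁_bind₁_comm {f g : σ → MvPolynomial σ R}
    (h : ∀ i, bind₁ f (g i) = bind₁ g (f i)) (p : MvPolynomial σ R) :
    bind₁ f (bind₁ g p) = bind₁ g (bind₁ f p) := by
  rw [bind₁_bind₁, bind₁_bind₁, _root_.funext h]

end MvPolynomial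

def toSecondPerm : Equiv.Perm (Fin 10) := Equiv.swap 6 8 * Equiv.swap 7 9

section OmegaProcess

variable {f g : MvPolynomial (Fin 10) K}

theorem toSecond_eq_rename (hg : g ∈ supported K {8, 9}ᶜ) : toSecond g = rename toSecondPerm g := by
  rw [rename_eq_aeval]
  refine bind₁_eqOn_supported (fun i hi => ?_) hg
  simp only [Set.mem_compl_iff, Set.mem_insert_iff, Set.mem_singleton_iff, not_or] at hi
  fin_cases i <;> simp_all [toSecondPerm, Equiv.swap_apply_of_ne_of_ne]

theorem pderiv_toSecondPerm_toSecond (hg : g ∈ supported K {8, 9}ᶜ) (j : Fin 10) :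
    pderiv (toSecondPerm j) (toSecond g) = toSecond (pderiv j g) := by
  rw [toSecond_eq_rename hg, toSecond_eq_rename (pderiv_mem_supported j hg),
    pderiv_rename toSecondPerm.injective]

theorem pderiv_six_toSecond (hg : g ∈ supported K {8, 9}ᶜ) : pderiv 6 (toSecond g) = 0 := by
  have h := pderiv_toSecondPerm_toSecond hg 8
  rw [pderiv_eq_zero_of_mem_supported hg (by simp)] at h
  exact h.trans (map_zero (bind₁ _))

theorem pderiv_seven_toSecond (hg : g ∈ supported K {8, 9}ᶜ) : pderiv 7 (toSecond g) = 0 := by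
  have h := pderiv_toSecondPerm_toSecond hg 9
  rw [pderiv_eq_zero_of_mem_supported hg (by simp)] at h
  exact h.trans (map_zero (bind₁ _))

theorem pderiv_eight_toSecond (hg : g ∈ supported K {8, 9}ᶜ) :
    pderiv 8 (toSecond g) = toSecond (pderiv 6 g) :=
  pderiv_toSecondPerm_toSecond hg 6

theorem pderiv_nine_toSecond (hg : g ∈ supported K {8, 9}ᶜ) :
    pderiv 9 (toSecond g) = toSecond (pderiv 7 g) :=
  pderiv_toSecondPerm_toSecond hg 7

theorem collapse_eq_self (hf : f ∈ supported K {8, 9}ᶜ) : collapse f = f := by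
  conv_rhs => rw [← AlgHom.id_apply (R := K) f, ← bind₁_X_left]
  refine bind₁_eqOn_supported (fun i hi => ?_) hf
  simp_all

theorem collapse_toSecond (hg : g ∈ supported K {8, 9}ᶜ) : collapse (toSecond g) = g := by
  rw [collapse, toSecond, bind₁_bind₁]
  conv_rhs => rw [← AlgHom.id_apply (R := K) g, ← bind₁_X_left]
  refine bind₁_eqOn_supported (fun i hi => ?_) hg
  fin_cases i <;> simp_all

noncomputable def omegaLeft : Module.End K (MvPolynomial (Fin 10) K) :=
  (pderiv 6).toLinearMap * (pderiv 9).toLinearMap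

noncomputable def omegaRight : Module.End K (MvPolynomial (Fin 10) K) :=
  (pderiv 8).toLinearMap * (pderiv 7).toLinearMap

theorem Omega_eq_omegaLeft_sub_omegaRight :
    Omega = ⇑(omegaLeft - omegaRight : Module.End K (MvPolynomial (Fin 10) K)) :=
  rfl

theorem commute_omegaLeft_omegaRight : Commute (omegaLeft (K := K)) omegaRight := by
  refine LinearMap.ext fun p => ?_
  simp only [omegaLeft, omegaRight, Module.End.mul_apply, Derivation.coeFn_coe]
  rw [pderiv_pderiv_comm 9 8, pderiv_pderiv_comm 9 7, pderiv_pderiv_comm 6 8,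
    pderiv_pderiv_comm 6 7]

theorem omegaLeft_mul_toSecond (hf : f ∈ supported K {8, 9}ᶜ) (hg : g ∈ supported K {8, 9}ᶜ) :
    omegaLeft (f * toSecond g) = pderiv 6 f * toSecond (pderiv 7 g) := by
  simp [omegaLeft, Derivation.leibniz, pderiv_eq_zero_of_mem_supported hf,
    pderiv_nine_toSecond hg, pderiv_six_toSecond (pderiv_mem_supported 7 hg), mul_comm]

theorem omegaRight_mul_toSecond (hf : f ∈ supported K {8, 9}ᶜ) (hg : g ∈ supported K {8, 9}ᶜ) :
    omegaRight (f * toSecond g) = pderiv 7 f * toSecond (pderiv 6 g) := by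
  simp [omegaRight, Derivation.leibniz, pderiv_eq_zero_of_mem_supported (pderiv_mem_supported 7 hf),
    pderiv_eight_toSecond hg, pderiv_seven_toSecond hg, mul_comm]

theorem omegaLeft_pow_mul_toSecond (a : ℕ) (hf : f ∈ supported K {8, 9}ᶜ)
    (hg : g ∈ supported K {8, 9}ᶜ) :
    (omegaLeft ^ a) (f * toSecond g) = (pderiv 6)^[a] f * toSecond ((pderiv 7)^[a] g) := by
  induction a generalizing f g with
  | zero => rfl
  | succ a ih =>
    rw [pow_succ, Module.End.mul_apply, omegaLeft_mul_toSecond hf hg,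
      ih (pderiv_mem_supported 6 hf) (pderiv_mem_supported 7 hg)]
    rfl

theorem omegaRight_pow_mul_toSecond (b : ℕ) (hf : f ∈ supported K {8, 9}ᶜ)
    (hg : g ∈ supported K {8, 9}ᶜ) :
    (omegaRight ^ b) (f * toSecond g) = (pderiv 7)^[b] f * toSecond ((pderiv 6)^[b] g) := by
  induction b generalizing f g with
  | zero => rfl
  | succ b ih =>
    rw [pow_succ, Module.End.mul_apply, omegaRight_mul_toSecond hf hg,
      ih (pderiv_mem_supported 7 hf) (pderiv_mem_supported 6 hg)]
    rfl

theorem transvectant_eq_sum (m : ℕ) (hf : f ∈ supported K {8, 9}ᶜ)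
    (hg : g ∈ supported K {8, 9}ᶜ) :
    transvectant m f g = ∑ k ∈ Finset.range (m + 1), ((-1 : K) ^ (m - k) * m.choose k) •
      ((pderiv 6)^[k] ((pderiv 7)^[m - k] f) * (pderiv 7)^[k] ((pderiv 6)^[m - k] g)) := by
  rw [transvectant, Omega_eq_omegaLeft_sub_omegaRight, ← Module.End.coe_pow, sub_eq_add_neg,
    ← neg_one_smul K omegaRight, (commute_omegaLeft_omegaRight.smul_right _).add_pow,
    LinearMap.sum_apply, collapse, map_sum]
  refine Finset.sum_congr rfl fun k _ => ?_
  have hf' := iterate_pderiv_mem_supported 7 (m - k) hf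
  have hg' := iterate_pderiv_mem_supported 6 (m - k) hg
  have hA := collapse_eq_self (iterate_pderiv_mem_supported 6 k hf')
  have hB := collapse_toSecond (iterate_pderiv_mem_supported 7 k hg')
  rw [collapse] at hA hB
  rw [smul_pow, Module.End.mul_apply, Module.End.mul_apply, Module.End.natCast_apply,
    map_nsmul, LinearMap.smul_apply, omegaRight_pow_mul_toSecond _ hf hg]
  simp only [map_nsmul, map_smul]
  rw [omegaLeft_pow_mul_toSecond _ hf' hg', map_mul, hA, hB, ← Nat.cast_smul_eq_nsmul K,
    smul_smul, mul_comm]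

theorem transvectant_two (hf : f ∈ supported K {8, 9}ᶜ) (hg : g ∈ supported K {8, 9}ᶜ) :
    transvectant 2 f g = (pderiv 6)^[2] f * (pderiv 7)^[2] g
      - 2 * (pderiv 6 (pderiv 7 f) * pderiv 7 (pderiv 6 g))
      + (pderiv 7)^[2] f * (pderiv 6)^[2] g := by
  rw [transvectant_eq_sum 2 hf hg]
  simp only [Finset.sum_range_succ, Finset.sum_range_zero, Nat.choose, Nat.reduceSub, Nat.reduceAdd,
    Function.iterate_zero_apply, Function.iterate_one, Algebra.smul_def, algebraMap_eq, map_mul,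
    map_pow, map_neg, map_one, map_natCast]
  ring

theorem transvectant_four (hf : f ∈ supported K {8, 9}ᶜ) (hg : g ∈ supported K {8, 9}ᶜ) :
    transvectant 4 f g = (pderiv 6)^[4] f * (pderiv 7)^[4] g
      - 4 * ((pderiv 6)^[3] (pderiv 7 f) * (pderiv 7)^[3] (pderiv 6 g))
      + 6 * ((pderiv 6)^[2] ((pderiv 7)^[2] f) * (pderiv 7)^[2] ((pderiv 6)^[2] g))
      - 4 * (pderiv 6 ((pderiv 7)^[3] f) * pderiv 7 ((pderiv 6)^[3] g))
      + (pderiv 7)^[4] f * (pderiv 6)^[4] g := by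
  rw [transvectant_eq_sum 4 hf hg]
  simp only [Finset.sum_range_succ, Finset.sum_range_zero, Nat.choose, Nat.reduceSub, Nat.reduceAdd,
    Function.iterate_zero_apply, Function.iterate_one, Algebra.smul_def, algebraMap_eq, map_mul,
    map_pow, map_neg, map_one, map_natCast]
  ring

end OmegaProcess

noncomputable def coeffSubst (a : Fin 6 → K) (i : Fin 10) : MvPolynomial (Fin 10) K :=
  if h : (i : ℕ) < 6 then C (a ⟨i, h⟩) else X i

section Specialization

variable (a : Fin 6 → K)

theorem pderiv_bind₁_coeffSubst {j : Fin 10} (hj : 6 ≤ (j : ℕ)) (p : MvPolynomial (Fin 10) K) :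
    pderiv j (bind₁ (coeffSubst a) p) = bind₁ (coeffSubst a) (pderiv j p) := by
  refine pderiv_bind₁_comm (fun i => ?_) p
  by_cases hi : (i : ℕ) < 6
  · have hij : i ≠ j := fun h => by omega
    simp [coeffSubst, hi, pderiv_X_of_ne hij]
  · classical
    simp only [coeffSubst, hi, dite_false, pderiv_X, Pi.single_apply]
    split_ifs <;> simp

theorem Omega_bind₁_coeffSubst (p : MvPolynomial (Fin 10) K) :
    Omega (bind₁ (coeffSubst a) p) = bind₁ (coeffSubst a) (Omega p) := by
  simp only [Omega, map_sub, pderiv_bind₁_coeffSubst a (show 6 ≤ ((6 : Fin 10) : ℕ) by decide),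
    pderiv_bind₁_coeffSubst a (show 6 ≤ ((7 : Fin 10) : ℕ) by decide),
    pderiv_bind₁_coeffSubst a (show 6 ≤ ((8 : Fin 10) : ℕ) by decide),
    pderiv_bind₁_coeffSubst a (show 6 ≤ ((9 : Fin 10) : ℕ) by decide)]

theorem toSecond_bind₁_coeffSubst (p : MvPolynomial (Fin 10) K) :
    toSecond (bind₁ (coeffSubst a) p) = bind₁ (coeffSubst a) (toSecond p) :=
  bind₁_bind₁_comm (fun i => by fin_cases i <;> simp [coeffSubst]) p

theorem collapse_bind₁_coeffSubst (p : MvPolynomial (Fin 10) K) :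
    collapse (bind₁ (coeffSubst a) p) = bind₁ (coeffSubst a) (collapse p) :=
  bind₁_bind₁_comm (fun i => by fin_cases i <;> simp [coeffSubst]) p

theorem transvectant_bind₁_coeffSubst (m : ℕ) (f g : MvPolynomial (Fin 10) K) :
    transvectant m (bind₁ (coeffSubst a) f) (bind₁ (coeffSubst a) g) =
      bind₁ (coeffSubst a) (transvectant m f g) := by
  have hΩ : ∀ n p, Omega^[n] (bind₁ (coeffSubst a) p) = bind₁ (coeffSubst a) (Omega^[n] p) :=
    Function.Commute.iterate_left (Omega_bind₁_coeffSubst a)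
  rw [transvectant, transvectant, toSecond_bind₁_coeffSubst, ← map_mul, hΩ,
    collapse_bind₁_coeffSubst]

theorem eval_bind₁_coeffSubst {v : Fin 10 → K} (hv : ∀ i, a i = v (Fin.castLE (by norm_num) i))
    (p : MvPolynomial (Fin 10) K) : eval v (bind₁ (coeffSubst a) p) = eval v p := by
  change eval₂Hom (RingHom.id K) v _ = eval₂Hom (RingHom.id K) v p
  rw [eval₂Hom_bind₁]
  congr 2
  funext i
  by_cases hi : (i : ℕ) < 6 <;> simp [coeffSubst, hi, hv, Fin.castLE]

end Specialization

def exampleCoeffs : Fin 6 → ℚ := ![1, -2, -10, 23, -6, -4]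

noncomputable def exampleQuintic : MvPolynomial (Fin 10) ℚ :=
  X 6 ^ 5 - 2 * X 6 ^ 4 * X 7 - 10 * X 6 ^ 3 * X 7 ^ 2 + 23 * X 6 ^ 2 * X 7 ^ 3 -
    6 * X 6 * X 7 ^ 4 - 4 * X 7 ^ 5

noncomputable def exampleI : MvPolynomial (Fin 10) ℚ :=
  548 * X 6 ^ 2 - 1004 * X 6 * X 7 + 1267 * X 7 ^ 2

noncomputable def exampleJ : MvPolynomial (Fin 10) ℚ :=
  -1058 * X 6 ^ 3 + 2504 * X 6 ^ 2 * X 7 - 3846 * X 6 * X 7 ^ 2 + 1609 * X 7 ^ 3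

noncomputable def exampleTau : MvPolynomial (Fin 10) ℚ :=
  2968594 * X 6 ^ 2 - 2845257 * X 6 * X 7 - 1352454 * X 7 ^ 2

theorem exampleForms_mem_supported :
    exampleQuintic ∈ supported ℚ {8, 9}ᶜ ∧ exampleI ∈ supported ℚ {8, 9}ᶜ ∧
      exampleJ ∈ supported ℚ {8, 9}ᶜ ∧ exampleTau ∈ supported ℚ {8, 9}ᶜ := by
  have h6 : (X 6 : MvPolynomial (Fin 10) ℚ) ∈ supported ℚ {8, 9}ᶜ := X_mem_supported.2 (by simp)
  have h7 : (X 7 : MvPolynomial (Fin 10) ℚ) ∈ supported ℚ {8, 9}ᶜ := X_mem_supported.2 (by simp)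
  refine ⟨?_, ?_, ?_, ?_⟩
  all_goals
    simp only [exampleQuintic, exampleI, exampleJ, exampleTau]
    repeat' first | exact h6 | exact h7 | exact ofNat_mem _ _ | apply add_mem | apply sub_mem |
      apply pow_mem | apply mul_mem | apply neg_mem

theorem bind₁_coeffSubst_genQuintic :
    bind₁ (coeffSubst exampleCoeffs) genQuintic = exampleQuintic := by
  simp only [genQuintic, map_add, map_mul, map_pow, bind₁_X_right]
  change C 1 * X 6 ^ 5 + C (-2) * X 6 ^ 4 * X 7 + C (-10) * X 6 ^ 3 * X 7 ^ 2 +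
    C 23 * X 6 ^ 2 * X 7 ^ 3 + C (-6) * X 6 * X 7 ^ 4 + C (-4) * X 7 ^ 5 = _
  simp only [exampleQuintic, map_neg, map_one, map_ofNat]
  ring

theorem transvectant_exampleQuintic_exampleQuintic :
    transvectant 4 exampleQuintic exampleQuintic = C 288 * exampleI := by
  obtain ⟨hq, -⟩ := exampleForms_mem_supported
  rw [transvectant_four hq hq]
  simp only [exampleQuintic, exampleI, Function.iterate_succ_apply', Function.iterate_zero_apply,
    map_add, map_sub, pderiv_mul, pderiv_pow, pderiv_X_self,
    pderiv_X_of_ne (by decide : (7 : Fin 10) ≠ 6), pderiv_X_of_ne (by decide : (6 : Fin 10) ≠ 7),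
    Derivation.map_ofNat, map_zero, mul_zero, zero_mul, add_zero, zero_add, sub_zero, mul_one,
    Nat.cast_ofNat, Nat.reduceSub, pow_one, map_ofNat]
  ring

theorem transvectant_exampleQuintic_exampleI :
    transvectant 2 exampleQuintic exampleI = C (-12) * exampleJ := by
  obtain ⟨hq, hi, -⟩ := exampleForms_mem_supported
  rw [transvectant_two hq hi]
  simp only [exampleQuintic, exampleI, exampleJ, Function.iterate_succ_apply',
    Function.iterate_zero_apply, map_add, map_sub, map_neg, pderiv_mul, pderiv_pow, pderiv_X_self,
    pderiv_X_of_ne (by decide : (7 : Fin 10) ≠ 6), pderiv_X_of_ne (by decide : (6 : Fin 10) ≠ 7),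
    Derivation.map_ofNat, map_zero, mul_zero, zero_mul, add_zero, zero_add, sub_zero, mul_one,
    Nat.cast_ofNat, Nat.reduceSub, pow_one, map_ofNat]
  ring

theorem transvectant_exampleI_exampleI : transvectant 2 exampleI exampleI = C 3538496 := by
  obtain ⟨-, hi, -⟩ := exampleForms_mem_supported
  rw [transvectant_two hi hi]
  simp only [exampleI, Function.iterate_succ_apply', Function.iterate_zero_apply, map_add, map_sub,
    pderiv_mul, pderiv_pow, pderiv_X_self, pderiv_X_of_ne (by decide : (7 : Fin 10) ≠ 6),
    pderiv_X_of_ne (by decide : (6 : Fin 10) ≠ 7), Derivation.map_ofNat, map_zero, mul_zero,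
    zero_mul, add_zero, zero_add, sub_zero, mul_one, Nat.cast_ofNat, Nat.reduceSub, pow_one,
    map_ofNat]
  ring

theorem transvectant_exampleJ_exampleJ : transvectant 2 exampleJ exampleJ = C 16 * exampleTau := by
  obtain ⟨-, -, hj, -⟩ := exampleForms_mem_supported
  rw [transvectant_two hj hj]
  simp only [exampleJ, exampleTau, Function.iterate_succ_apply', Function.iterate_zero_apply,
    map_add, map_sub, map_neg, pderiv_mul, pderiv_pow, pderiv_X_self,
    pderiv_X_of_ne (by decide : (7 : Fin 10) ≠ 6), pderiv_X_of_ne (by decide : (6 : Fin 10) ≠ 7),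
    Derivation.map_ofNat, map_zero, mul_zero, zero_mul, add_zero, zero_add, sub_zero, mul_one,
    Nat.cast_ofNat, Nat.reduceSub, pow_one, map_ofNat]
  ring

theorem transvectant_exampleTau_exampleI : transvectant 2 exampleTau exampleI = C 6366979168 := by
  obtain ⟨-, hi, -, ht⟩ := exampleForms_mem_supported
  rw [transvectant_two ht hi]
  simp only [exampleI, exampleTau, Function.iterate_succ_apply', Function.iterate_zero_apply,
    map_add, map_sub, pderiv_mul, pderiv_pow, pderiv_X_self,
    pderiv_X_of_ne (by decide : (7 : Fin 10) ≠ 6), pderiv_X_of_ne (by decide : (6 : Fin 10) ≠ 7),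
    Derivation.map_ofNat, map_zero, mul_zero, zero_mul, add_zero, zero_add, sub_zero, mul_one,
    Nat.cast_ofNat, Nat.reduceSub, pow_one, map_ofNat]
  ring

theorem bind₁_coeffSubst_covI : bind₁ (coeffSubst exampleCoeffs) covI = exampleI := by
  rw [covI, map_mul, bind₁_C_right, ← transvectant_bind₁_coeffSubst, bind₁_coeffSubst_genQuintic,
    transvectant_exampleQuintic_exampleQuintic, ← mul_assoc, ← C_mul]
  norm_num

theorem bind₁_coeffSubst_covJ : bind₁ (coeffSubst exampleCoeffs) covJ = exampleJ := by
  rw [covJ, map_neg, map_mul, bind₁_C_right, ← transvectant_bind₁_coeffSubst,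
    bind₁_coeffSubst_genQuintic, bind₁_coeffSubst_covI, transvectant_exampleQuintic_exampleI,
    ← mul_assoc, ← C_mul]
  norm_num

theorem bind₁_coeffSubst_covTau : bind₁ (coeffSubst exampleCoeffs) covTau = exampleTau := by
  rw [covTau, map_mul, bind₁_C_right, ← transvectant_bind₁_coeffSubst, bind₁_coeffSubst_covJ,
    transvectant_exampleJ_exampleJ, ← mul_assoc, ← C_mul]
  norm_num

theorem bind₁_coeffSubst_invA : bind₁ (coeffSubst exampleCoeffs) invA = C 110578 := by
  rw [invA, map_mul, bind₁_C_right, ← transvectant_bind₁_coeffSubst, bind₁_coeffSubst_covI,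
    transvectant_exampleI_exampleI, ← C_mul]
  norm_num

theorem bind₁_coeffSubst_invB : bind₁ (coeffSubst exampleCoeffs) invB = C 795872396 := by
  rw [invB, map_mul, bind₁_C_right, ← transvectant_bind₁_coeffSubst, bind₁_coeffSubst_covTau,
    bind₁_coeffSubst_covI, transvectant_exampleTau_exampleI, ← C_mul]
  norm_num

theorem bind₁_coeffSubst_invDelta : bind₁ (coeffSubst exampleCoeffs) invDelta = C 72352036 := by
  rw [invDelta, map_mul, bind₁_C_right, map_sub, map_pow, map_mul, map_ofNat, bind₁_coeffSubst_invA,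
    bind₁_coeffSubst_invB, ← map_ofNat C 4, ← C_pow, ← C_mul, ← C_sub, ← C_mul]
  norm_num

/-- for the quintic x⁵ − 2x⁴ − 10x³ + 23x² − 6x − 4 over ℚ, the
invariants of the associated binary quintic satisfy δ = 25Δ/A² = (5/13)². -/
theorem delta_of_example_quintic :
    ∀ v : Fin 10 → ℚ, v 0 = 1 → v 1 = -2 → v 2 = -10 → v 3 = 23 → v 4 = -6 → v 5 = -4 →
      eval v (invA (K := ℚ)) ≠ 0 ∧
      25 * eval v (invDelta (K := ℚ)) / (eval v (invA (K := ℚ))) ^ 2 = (5 / 13) ^ 2 := by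
  intro v h0 h1 h2 h3 h4 h5
  have hv : ∀ i, exampleCoeffs i = v (Fin.castLE (by norm_num) i) := by
    intro i
    fin_cases i <;> simp [exampleCoeffs, *]
  rw [← eval_bind₁_coeffSubst _ hv, ← eval_bind₁_coeffSubst _ hv invDelta,
    bind₁_coeffSubst_invA, bind₁_coeffSubst_invDelta, eval_C, eval_C]
  norm_num
end

section
/- The generic binary quintic f = a₀x⁵ + … + a₅y⁵, viewed as the polynomial f(x,1) of degree 5 over the field ℚ(a₀,…,a₅), has splitting field with Galois group isomorphic to the symmetric group S₅. -/
/-!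
Embed the coefficient field into the field of rational functions in new indeterminates
u, t₁,…,tₙ by aₖ ↦ u·eₖ(t). This is injective: it is a₀ ↦ u, aₖ ↦ u·tₖ (undone by dividing by u)
followed by tₖ ↦ eₖ(t), and the elementary symmetric polynomials are algebraically independent.
There the generic polynomial factors as u·∏ (X + tᵢ), so it splits with the n distinct roots -tᵢ,
and every permutation of the tᵢ is an automorphism fixing the coefficient field. Hence the Galois
group acts on the roots as the full symmetric group.
-/

open Polynomial

/-- The field ℚ(a₀,…,a₅) of rational functions in six indeterminates. -/
abbrev QA : Type := FractionRing (MvPolynomial (Fin 6) ℚ)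

/-- The generic quintic f(x,1) = a₀x⁵ + a₁x⁴ + a₂x³ + a₃x² + a₄x + a₅
as a polynomial over ℚ(a₀,…,a₅). -/
noncomputable def genericQuintic : Polynomial QA :=
  ∑ k : Fin 6,
    C (algebraMap (MvPolynomial (Fin 6) ℚ) QA (MvPolynomial.X k)) * X ^ (5 - (k : ℕ))

theorem Polynomial.Gal.galActionHom_bijective_of_forall_exists_algEquiv {F E : Type*} [Field F]
    [Field E] [Algebra F E] (p : F[X]) [Fact ((p.map (algebraMap F E)).Splits)]
    (h : ∀ π : Equiv.Perm (p.rootSet E), ∃ ϕ : E ≃ₐ[F] E, ∀ x : p.rootSet E, ϕ x = π x) :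
    Function.Bijective (galActionHom p E) := by
  refine ⟨galActionHom_injective p E, fun π => ?_⟩
  obtain ⟨ϕ, hϕ⟩ := h π
  exact ⟨restrict p E ϕ,
    Equiv.ext fun x => Subtype.ext ((galActionHom_restrict p E ϕ x).trans (hϕ x))⟩

namespace GenericPolynomial

variable (R : Type*) [CommRing R] (n : ℕ)

abbrev CoeffRing : Type _ := MvPolynomial (Fin (n + 1)) R

noncomputable def genericPolynomial : (FractionRing (CoeffRing R n))[X] :=
  ∑ k : Fin (n + 1), C (algebraMap (CoeffRing R n) _ (MvPolynomial.X k)) * X ^ (n - (k : ℕ))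

/-- `R[u][t₀, …, tₙ₋₁]`, with `u = leadingVar` and `tᵢ = X i`. -/
abbrev RootRing : Type _ := MvPolynomial (Fin n) R[X]

abbrev RootField : Type _ := FractionRing (RootRing R n)

noncomputable def leadingVar : RootRing R n := MvPolynomial.C Polynomial.X

/-- The coefficients of `u · ∏ (X + tᵢ)`. -/
noncomputable def coeffsToRoots : CoeffRing R n →ₐ[R] RootRing R n :=
  MvPolynomial.aeval fun k => leadingVar R n * MvPolynomial.esymm (Fin n) R[X] k

noncomputable def scaleByLeadingVar : CoeffRing R n →ₐ[R] RootRing R n :=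
  MvPolynomial.aeval (Fin.cases (leadingVar R n) fun i => leadingVar R n * MvPolynomial.X i)

theorem coeffsToRoots_eq_comp :
    coeffsToRoots R n = (((MvPolynomial.symmetricSubalgebra (Fin n) R[X]).val.comp
      (MvPolynomial.esymmAlgHom (Fin n) R[X] n)).restrictScalars R).comp
        (scaleByLeadingVar R n) := by
  refine MvPolynomial.algHom_ext (Fin.cases ?_ fun i => ?_)
  · simp [coeffsToRoots, scaleByLeadingVar, leadingVar]
  · simp [coeffsToRoots, scaleByLeadingVar, leadingVar, MvPolynomial.esymmAlgHom_apply]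

theorem rename_coeffsToRoots (σ : Equiv.Perm (Fin n)) (a : CoeffRing R n) :
    MvPolynomial.rename σ (coeffsToRoots R n a) = coeffsToRoots R n a := by
  suffices ((MvPolynomial.rename σ).restrictScalars R).comp (coeffsToRoots R n) =
      coeffsToRoots R n from DFunLike.congr_fun this a
  refine MvPolynomial.algHom_ext fun k => ?_
  simp [coeffsToRoots, leadingVar, MvPolynomial.rename_esymm]

variable [IsDomain R]

noncomputable def divideByLeadingCoeff : RootRing R n →+* FractionRing (CoeffRing R n) :=
  let a (k : Fin (n + 1)) := algebraMap (CoeffRing R n) _ (MvPolynomial.X k)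
  MvPolynomial.eval₂Hom (Polynomial.eval₂RingHom (algebraMap R _) (a 0)) fun i => a i.succ / a 0

theorem scaleByLeadingVar_injective : Function.Injective (scaleByLeadingVar R n) := by
  have ha₀ : algebraMap (CoeffRing R n) (FractionRing (CoeffRing R n)) (MvPolynomial.X 0) ≠ 0 :=
    IsFractionRing.to_map_ne_zero_of_mem_nonZeroDivisors
      (mem_nonZeroDivisors_of_ne_zero (MvPolynomial.X_ne_zero 0))
  have h : (divideByLeadingCoeff R n).comp (scaleByLeadingVar R n).toRingHom =
      algebraMap (CoeffRing R n) (FractionRing (CoeffRing R n)) := by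
    refine MvPolynomial.ringHom_ext (fun r => ?_) (Fin.cases ?_ fun i => ?_)
    · simp [divideByLeadingCoeff, scaleByLeadingVar,
        IsScalarTower.algebraMap_apply R (CoeffRing R n), MvPolynomial.algebraMap_eq]
    · simp [divideByLeadingCoeff, scaleByLeadingVar, leadingVar]
    · simp only [divideByLeadingCoeff, scaleByLeadingVar, leadingVar, AlgHom.toRingHom_eq_coe,
        RingHom.coe_comp, RingHom.coe_coe, Function.comp_apply, MvPolynomial.aeval_X,
        Fin.cases_succ, MvPolynomial.coe_eval₂Hom, MvPolynomial.eval₂_mul, MvPolynomial.eval₂_C,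
        MvPolynomial.eval₂_X, coe_eval₂RingHom, eval₂_X]
      exact mul_div_cancel₀ _ ha₀
  refine Function.Injective.of_comp (f := divideByLeadingCoeff R n) ?_
  rw [← RingHom.coe_coe (scaleByLeadingVar R n), ← RingHom.coe_comp]
  exact h ▸ IsFractionRing.injective _ _

theorem coeffsToRoots_injective : Function.Injective (coeffsToRoots R n) := by
  rw [coeffsToRoots_eq_comp]
  exact (Subtype.val_injective.comp
    (MvPolynomial.esymmAlgHom_injective (σ := Fin n) R[X] (by simp))).comp
      (scaleByLeadingVar_injective R n)

noncomputable instance : Algebra (CoeffRing R n) (RootRing R n) := (coeffsToRoots R n).toAlgebra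

instance : FaithfulSMul (CoeffRing R n) (RootRing R n) :=
  (faithfulSMul_iff_algebraMap_injective _ _).mpr (coeffsToRoots_injective R n)

noncomputable instance : Algebra (FractionRing (CoeffRing R n)) (RootField R n) :=
  FractionRing.liftAlgebra _ _

noncomputable def root (i : Fin n) : RootField R n :=
  -algebraMap (RootRing R n) _ (MvPolynomial.X i)

theorem root_injective : Function.Injective (root R n) := fun _ _ h =>
  MvPolynomial.X_injective (IsFractionRing.injective (RootRing R n) _ (neg_injective h))

theorem map_genericPolynomial :
    (genericPolynomial R n).map (algebraMap _ (RootField R n)) =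
      C (algebraMap _ _ (leadingVar R n)) * ∏ i, (X - C (root R n i)) := by
  have hcoeff (k : Fin (n + 1)) : algebraMap (FractionRing (CoeffRing R n)) (RootField R n)
      (algebraMap (CoeffRing R n) _ (MvPolynomial.X k)) =
        algebraMap (RootRing R n) _ (leadingVar R n * MvPolynomial.esymm (Fin n) R[X] k) := by
    rw [← IsScalarTower.algebraMap_apply, IsScalarTower.algebraMap_apply _ (RootRing R n)]
    simp [RingHom.algebraMap_toAlgebra, coeffsToRoots]
  have hprod : ∏ i, (X - C (root R n i)) =
      (∑ k : Fin (n + 1), C (MvPolynomial.esymm (Fin n) R[X] k) * X ^ (n - (k : ℕ))).map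
        (algebraMap (RootRing R n) (RootField R n)) := by
    have := MvPolynomial.prod_C_add_X_eq_sum_esymm R[X] (Fin n)
    rw [Fintype.card_fin,
      Finset.sum_range fun k => C (MvPolynomial.esymm (Fin n) R[X] k) * X ^ (n - k)] at this
    simp [← this, Polynomial.map_prod, root]
  rw [hprod, genericPolynomial, Polynomial.map_sum, Polynomial.map_sum, Finset.mul_sum]
  simp [hcoeff, mul_assoc]

theorem splits_genericPolynomial :
    ((genericPolynomial R n).map (algebraMap _ (RootField R n))).Splits := by
  rw [map_genericPolynomial]
  exact (Splits.prod fun i _ => Splits.X_sub_C _).C_mul _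

theorem rootSet_genericPolynomial :
    (genericPolynomial R n).rootSet (RootField R n) = Set.range (root R n) := by
  have hu : algebraMap (RootRing R n) (RootField R n) (leadingVar R n) ≠ 0 :=
    (map_ne_zero_iff _ (IsFractionRing.injective _ _)).mpr
      (MvPolynomial.C_ne_zero.mpr Polynomial.X_ne_zero)
  have hne : (genericPolynomial R n).map (algebraMap _ (RootField R n)) ≠ 0 := by
    rw [map_genericPolynomial]
    exact mul_ne_zero (C_ne_zero.mpr hu)
      (monic_prod_of_monic _ _ fun i _ => monic_X_sub_C _).ne_zero
  ext x
  rw [mem_rootSet', and_iff_right hne, ← eval_map_algebraMap, map_genericPolynomial]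
  simp [hu, eval_prod, Finset.prod_eq_zero_iff, sub_eq_zero, eq_comm (a := x)]

noncomputable def permAlgEquiv (σ : Equiv.Perm (Fin n)) :
    RootRing R n ≃ₐ[CoeffRing R n] RootRing R n :=
  AlgEquiv.ofRingEquiv (f := (MvPolynomial.renameEquiv R[X] σ).toRingEquiv)
    (rename_coeffsToRoots R n σ)

noncomputable def permFieldAlgEquiv (σ : Equiv.Perm (Fin n)) :
    RootField R n ≃ₐ[FractionRing (CoeffRing R n)] RootField R n :=
  IsFractionRing.fieldEquivOfAlgEquiv _ _ _ (permAlgEquiv R n σ)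

theorem permFieldAlgEquiv_root (σ : Equiv.Perm (Fin n)) (i : Fin n) :
    permFieldAlgEquiv R n σ (root R n i) = root R n (σ i) := by
  simp only [permFieldAlgEquiv, root, map_neg, IsFractionRing.fieldEquivOfAlgEquiv_algebraMap]
  exact congrArg (-algebraMap _ _ ·) (MvPolynomial.rename_X σ i)

theorem nonempty_gal_mulEquiv_perm :
    Nonempty ((genericPolynomial R n).Gal ≃* Equiv.Perm (Fin n)) := by
  have : Fact (((genericPolynomial R n).map (algebraMap _ (RootField R n))).Splits) :=
    ⟨splits_genericPolynomial R n⟩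
  let e : Fin n ≃ (genericPolynomial R n).rootSet (RootField R n) :=
    (Equiv.ofInjective _ (root_injective R n)).trans
      (Equiv.setCongr (rootSet_genericPolynomial R n).symm)
  have he (i : Fin n) : (e i : RootField R n) = root R n i := rfl
  refine ⟨(MulEquiv.ofBijective _
    (Gal.galActionHom_bijective_of_forall_exists_algEquiv _ fun π => ?_)).trans
      e.symm.permCongrHom⟩
  refine ⟨permFieldAlgEquiv R n (e.symm.permCongr π), fun x => ?_⟩
  obtain ⟨i, rfl⟩ := e.surjective x
  rw [he, permFieldAlgEquiv_root, Equiv.permCongr_apply, Equiv.symm_symm, ← he,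
    e.apply_symm_apply]

end GenericPolynomial

/-- the Galois group of the splitting field of the generic quintic
over ℚ(a₀,…,a₅) is isomorphic to the symmetric group S₅. -/
theorem generic_quintic_galois_S5 :
    Nonempty (genericQuintic.Gal ≃* Equiv.Perm (Fin 5)) :=
  GenericPolynomial.nonempty_gal_mulEquiv_perm ℚ 5
end
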